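/- arXiv:1908.06555 — 3 statements merged into one kernel-verified Lean document; each statement's English description precedes it below -/
import Mathlib

section
/- Let {x_a}_{a∈E_k} be an array of i.i.d. centered random variables with variance σ², and set {y_a} := L{x_a} and {z_a} := E{x_a}, where E := Q − L. Then for each edge a, the random variables y_a and z_a are uncorrelated, and z_a has mean zero and variance M(σ²) − σ². -/
open MeasureTheory ProbabilityTheory

lemma aux_prod_indep {Ω : Type*} [MeasurableSpace Ω] (P : Measure Ω) [IsProbabilityMeasure P]
    {ι : Type*} (Y : ι → Ω → ℝ) (hm : ∀ i, Measurable (Y i))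
    (hindep : iIndepFun Y P) (hint : ∀ i, Integrable (Y i) P)
    (S : Finset ι) :
    Integrable (fun ω => ∏ i ∈ S, Y i ω) P ∧
      ∫ ω, ∏ i ∈ S, Y i ω ∂P = ∏ i ∈ S, ∫ ω, Y i ω ∂P := by
  classical
  induction S using Finset.induction_on with
  | empty => simp
  | @insert a s ha ih =>
    have hind : IndepFun (∏ j ∈ s, Y j) (Y a) P :=
      hindep.indepFun_finsetProd_of_notMem hm ha
    have hps : (∏ j ∈ s, Y j) = fun ω => ∏ j ∈ s, Y j ω := by
      funext ω; simp
    have hint_s : Integrable (∏ j ∈ s, Y j) P := by rw [hps]; exact ih.1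
    have hmul : Integrable ((∏ j ∈ s, Y j) * Y a) P := hind.integrable_mul hint_s (hint a)
    have heq : (fun ω => ∏ i ∈ insert a s, Y i ω) = (∏ j ∈ s, Y j) * Y a := by
      funext ω
      simp only [Finset.prod_insert ha, Pi.mul_apply, hps]
      ring
    constructor
    · rw [heq]; exact hmul
    · calc ∫ ω, ∏ i ∈ insert a s, Y i ω ∂P
          = ∫ ω, ((∏ j ∈ s, Y j) * Y a) ω ∂P := by rw [heq]
        _ = (∫ ω, (∏ j ∈ s, Y j) ω ∂P) * ∫ ω, Y a ω ∂P :=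
            hind.integral_mul_eq_mul_integral hint_s.aestronglyMeasurable (hint a).aestronglyMeasurable
        _ = (∏ i ∈ s, ∫ ω, Y i ω ∂P) * ∫ ω, Y a ω ∂P := by rw [hps]; rw [ih.2]
        _ = ∏ i ∈ insert a s, ∫ ω, Y i ω ∂P := by
            rw [Finset.prod_insert ha]; ring

/-- Let `{x_{(i,j)}}` be i.i.d. centered random variables with variance `σ²`
(the children of a fixed edge `a`), and set
`w = (Q{x})_a = (1/b)Σ_i(∏_j(1+x_{(i,j)}) − 1)`,
`y = (L{x})_a = (1/b)Σ_{i,j} x_{(i,j)}`, and `z = (E{x})_a = w − y`.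
Then `y` and `z` are uncorrelated, `z` has mean zero, and `z` has variance
`M(σ²) − σ²` where `M(σ²) = ((1+σ²)^b − 1)/b`. -/
theorem stmt5 {Ω : Type*} [MeasurableSpace Ω] (P : Measure Ω) [IsProbabilityMeasure P]
    (b : ℕ) (hb : 2 ≤ b) (σ : ℝ)
    (X : Fin b × Fin b → Ω → ℝ)
    (hmeas : ∀ e, Measurable (X e))
    (hindep : iIndepFun X P)
    (hident : ∀ e e', IdentDistrib (X e) (X e') P P)
    (hL2 : ∀ e, MemLp (X e) 2 P)
    (hmean : ∀ e, ∫ ω, X e ω ∂P = 0)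
    (hvar : ∀ e, variance (X e) P = σ ^ 2)
    (w y z : Ω → ℝ)
    (hw : w = fun ω => (1 / (b : ℝ)) * ∑ i : Fin b, (∏ j : Fin b, (1 + X (i, j) ω) - 1))
    (hy : y = fun ω => (1 / (b : ℝ)) * ∑ i : Fin b, ∑ j : Fin b, X (i, j) ω)
    (hz : z = fun ω => w ω - y ω) :
    (∫ ω, y ω * z ω ∂P = (∫ ω, y ω ∂P) * (∫ ω, z ω ∂P)) ∧
    (∫ ω, z ω ∂P = 0) ∧
    variance z P = ((1 + σ ^ 2) ^ b - 1) / b - σ ^ 2 := by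
  classical
  have hbne : (b : ℝ) ≠ 0 := by
    have : b ≠ 0 := by omega
    exact_mod_cast this
  -- basic integrability and moments
  have hintX : ∀ e, Integrable (X e) P := fun e => (hL2 e).integrable one_le_two
  have hintX2 : ∀ e, Integrable (fun ω => X e ω ^ 2) P := fun e => (hL2 e).integrable_sq
  have hX2 : ∀ e, ∫ ω, X e ω ^ 2 ∂P = σ ^ 2 := by
    intro e
    have h := variance_eq_sub (hL2 e)
    rw [hvar e] at h
    simp only [Pi.pow_apply] at h
    rw [hmean e] at h
    simpa using h.symm.trans (by ring_nf)
  -- per-edge integrals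
  have h1int : ∀ e, Integrable (fun ω => 1 + X e ω) P :=
    fun e => (integrable_const 1).add (hintX e)
  have h1val : ∀ e, ∫ ω, (1 + X e ω) ∂P = 1 := by
    intro e
    rw [integral_add (integrable_const 1) (hintX e), hmean e]
    simp
  have h2int : ∀ e, Integrable (fun ω => (1 + X e ω) ^ 2) P := by
    intro e
    have hfe : (fun ω => (1 + X e ω) ^ 2) = fun ω => 1 + 2 * X e ω + X e ω ^ 2 := by
      funext ω; ring
    rw [hfe]
    exact ((integrable_const 1).add ((hintX e).const_mul 2)).add (hintX2 e)
  have h2val : ∀ e, ∫ ω, (1 + X e ω) ^ 2 ∂P = 1 + σ ^ 2 := by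
    intro e
    have hfe : (fun ω => (1 + X e ω) ^ 2) = fun ω => 1 + 2 * X e ω + X e ω ^ 2 := by
      funext ω; ring
    have hB : Integrable (fun ω => (2:ℝ) * X e ω) P := (hintX e).const_mul 2
    have hA : Integrable (fun ω => 1 + 2 * X e ω) P := (integrable_const 1).add hB
    rw [hfe, integral_add hA (hintX2 e), integral_add (integrable_const 1) hB,
      integral_const_mul, hmean e, hX2 e]
    simp
  have h3int : ∀ e, Integrable (fun ω => X e ω * (1 + X e ω)) P := by
    intro e
    have hfe : (fun ω => X e ω * (1 + X e ω)) = fun ω => X e ω + X e ω ^ 2 := by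
      funext ω; ring
    rw [hfe]
    exact (hintX e).add (hintX2 e)
  have h3val : ∀ e, ∫ ω, X e ω * (1 + X e ω) ∂P = σ ^ 2 := by
    intro e
    have hfe : (fun ω => X e ω * (1 + X e ω)) = fun ω => X e ω + X e ω ^ 2 := by
      funext ω; ring
    rw [hfe, integral_add (hintX e) (hintX2 e), hmean e, hX2 e]
    simp
  -- the key product tool
  have key : ∀ (f : Fin b × Fin b → ℝ → ℝ), (∀ e, Measurable (f e)) →
      (∀ e, Integrable (fun ω => f e (X e ω)) P) → ∀ S : Finset (Fin b × Fin b),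
      Integrable (fun ω => ∏ e ∈ S, f e (X e ω)) P ∧
        ∫ ω, ∏ e ∈ S, f e (X e ω) ∂P = ∏ e ∈ S, ∫ ω, f e (X e ω) ∂P := by
    intro f hf hi S
    exact aux_prod_indep P (fun e => f e ∘ X e) (fun e => (hf e).comp (hmeas e))
      (hindep.comp _ hf) hi S
  -- row products
  set Pr : Fin b → Ω → ℝ := fun i ω => ∏ j : Fin b, (1 + X (i, j) ω) with hPrdef
  have hbridge : ∀ (i : Fin b) (ω : Ω),
      ∏ e ∈ ({i} ×ˢ (Finset.univ : Finset (Fin b))), (1 + X e ω) = Pr i ω := by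
    intro i ω
    rw [Finset.prod_product, Finset.prod_singleton]
  have hcard : ∀ i : Fin b, ({i} ×ˢ (Finset.univ : Finset (Fin b))).card = b := by
    intro i; simp
  have hPrA : ∀ i : Fin b, Integrable (Pr i) P ∧ ∫ ω, Pr i ω ∂P = 1 := by
    intro i
    have h := key (fun _ => fun t => 1 + t)
      (fun e => measurable_const.add measurable_id) h1int ({i} ×ˢ Finset.univ)
    have heq : (fun ω => ∏ e ∈ ({i} ×ˢ (Finset.univ : Finset (Fin b))), (1 + X e ω)) = Pr i := by
      funext ω; exact hbridge i ω
    rw [heq] at h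
    refine ⟨h.1, ?_⟩
    rw [h.2, Finset.prod_congr rfl (fun e _ => h1val e), Finset.prod_const_one]
  have hPrB : ∀ i : Fin b, Integrable (fun ω => Pr i ω ^ 2) P ∧
      ∫ ω, Pr i ω ^ 2 ∂P = (1 + σ ^ 2) ^ b := by
    intro i
    have h := key (fun _ => fun t => (1 + t) ^ 2)
      (fun e => (measurable_const.add measurable_id).pow_const 2) h2int ({i} ×ˢ Finset.univ)
    have heq : (fun ω => ∏ e ∈ ({i} ×ˢ (Finset.univ : Finset (Fin b))), (1 + X e ω) ^ 2)
        = fun ω => Pr i ω ^ 2 := by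
      funext ω
      rw [Finset.prod_pow, hbridge i ω]
    rw [heq] at h
    refine ⟨h.1, ?_⟩
    rw [h.2, Finset.prod_congr rfl (fun e _ => h2val e), Finset.prod_const, hcard i]
  have hPrC : ∀ i i' : Fin b, i ≠ i' → Integrable (fun ω => Pr i ω * Pr i' ω) P ∧
      ∫ ω, Pr i ω * Pr i' ω ∂P = 1 := by
    intro i i' hne
    have h := key (fun _ => fun t => 1 + t)
      (fun e => measurable_const.add measurable_id) h1int (({i, i'} : Finset (Fin b)) ×ˢ Finset.univ)
    have heq : (fun ω => ∏ e ∈ (({i, i'} : Finset (Fin b)) ×ˢ (Finset.univ : Finset (Fin b))), (1 + X e ω))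
        = fun ω => Pr i ω * Pr i' ω := by
      funext ω
      rw [Finset.prod_product, Finset.prod_pair hne]
    rw [heq] at h
    refine ⟨h.1, ?_⟩
    rw [h.2, Finset.prod_congr rfl (fun e _ => h1val e), Finset.prod_const_one]
  -- X e' against a row product
  have hXPr : ∀ (i : Fin b) (e' : Fin b × Fin b), Integrable (fun ω => X e' ω * Pr i ω) P ∧
      ∫ ω, X e' ω * Pr i ω ∂P = if e'.1 = i then σ ^ 2 else 0 := by
    intro i e'
    by_cases hcase : e'.1 = i
    · -- e' in the row
      set g : Fin b × Fin b → ℝ → ℝ :=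
        Function.update (fun _ => fun t => 1 + t) e' (fun t => t * (1 + t)) with hgdef
      have hgm : ∀ e, Measurable (g e) := by
        intro e
        by_cases h : e = e'
        · subst h; rw [hgdef, Function.update_self]
          exact measurable_id.mul (measurable_const.add measurable_id)
        · rw [hgdef, Function.update_of_ne h]
          exact measurable_const.add measurable_id
      have hgi : ∀ e, Integrable (fun ω => g e (X e ω)) P := by
        intro e
        by_cases h : e = e'
        · subst h; rw [hgdef]; simp only [Function.update_self]; exact h3int e
        · rw [hgdef]; simp only [Function.update_of_ne h]; exact h1int e
      have hmem : e' ∈ ({i} ×ˢ (Finset.univ : Finset (Fin b))) := by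
        rw [Finset.mem_product]; simp [hcase]
      have h := key g hgm hgi ({i} ×ˢ Finset.univ)
      have heq : (fun ω => ∏ e ∈ ({i} ×ˢ (Finset.univ : Finset (Fin b))), g e (X e ω))
          = fun ω => X e' ω * Pr i ω := by
        funext ω
        have h2 : ∀ e ∈ (({i} ×ˢ (Finset.univ : Finset (Fin b)))).erase e',
            g e (X e ω) = 1 + X e ω := by
          intro e he
          have hne : e ≠ e' := Finset.ne_of_mem_erase he
          rw [hgdef, Function.update_of_ne hne]
        calc ∏ e ∈ ({i} ×ˢ (Finset.univ : Finset (Fin b))), g e (X e ω)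
            = g e' (X e' ω) * ∏ e ∈ (({i} ×ˢ (Finset.univ : Finset (Fin b)))).erase e', g e (X e ω) :=
              (Finset.mul_prod_erase _ _ hmem).symm
          _ = (X e' ω * (1 + X e' ω)) *
                ∏ e ∈ (({i} ×ˢ (Finset.univ : Finset (Fin b)))).erase e', (1 + X e ω) := by
              rw [hgdef, Function.update_self, Finset.prod_congr rfl h2]
          _ = X e' ω * ((1 + X e' ω) *
                ∏ e ∈ (({i} ×ˢ (Finset.univ : Finset (Fin b)))).erase e', (1 + X e ω)) := by ring
          _ = X e' ω * ∏ e ∈ ({i} ×ˢ (Finset.univ : Finset (Fin b))), (1 + X e ω) := by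
              rw [Finset.mul_prod_erase _ (fun e => 1 + X e ω) hmem]
          _ = X e' ω * Pr i ω := by rw [hbridge i ω]
      rw [heq] at h
      refine ⟨h.1, ?_⟩
      rw [h.2, if_pos hcase]
      have hv : ∀ e ∈ (({i} ×ˢ (Finset.univ : Finset (Fin b)))).erase e',
          (∫ ω, g e (X e ω) ∂P) = 1 := by
        intro e he
        have hne : e ≠ e' := Finset.ne_of_mem_erase he
        rw [hgdef]
        simp only [Function.update_of_ne hne]
        exact h1val e
      calc ∏ e ∈ ({i} ×ˢ (Finset.univ : Finset (Fin b))), ∫ ω, g e (X e ω) ∂P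
          = (∫ ω, g e' (X e' ω) ∂P) *
              ∏ e ∈ (({i} ×ˢ (Finset.univ : Finset (Fin b)))).erase e', ∫ ω, g e (X e ω) ∂P :=
            (Finset.mul_prod_erase _ _ hmem).symm
        _ = σ ^ 2 := by
            rw [Finset.prod_congr rfl hv, Finset.prod_const_one, mul_one, hgdef]
            simp only [Function.update_self]
            exact h3val e'
    · -- e' outside the row
      set g : Fin b × Fin b → ℝ → ℝ :=
        Function.update (fun _ => fun t => 1 + t) e' (fun t => t) with hgdef
      have hgm : ∀ e, Measurable (g e) := by
        intro e
        by_cases h : e = e'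
        · subst h; rw [hgdef, Function.update_self]; exact measurable_id
        · rw [hgdef, Function.update_of_ne h]; exact measurable_const.add measurable_id
      have hgi : ∀ e, Integrable (fun ω => g e (X e ω)) P := by
        intro e
        by_cases h : e = e'
        · subst h; rw [hgdef]; simp only [Function.update_self]; exact hintX e
        · rw [hgdef]; simp only [Function.update_of_ne h]; exact h1int e
      have hnm : e' ∉ ({i} ×ˢ (Finset.univ : Finset (Fin b))) := by
        rw [Finset.mem_product]
        simp [hcase]
      have h := key g hgm hgi (insert e' ({i} ×ˢ Finset.univ))
      have heq : (fun ω => ∏ e ∈ insert e' ({i} ×ˢ (Finset.univ : Finset (Fin b))), g e (X e ω))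
          = fun ω => X e' ω * Pr i ω := by
        funext ω
        rw [Finset.prod_insert hnm]
        have h2 : ∀ e ∈ ({i} ×ˢ (Finset.univ : Finset (Fin b))),
            g e (X e ω) = 1 + X e ω := by
          intro e he
          have hne : e ≠ e' := by rintro rfl; exact hnm he
          rw [hgdef, Function.update_of_ne hne]
        rw [Finset.prod_congr rfl h2, hbridge i ω, hgdef]
        simp only [Function.update_self]
      rw [heq] at h
      refine ⟨h.1, ?_⟩
      rw [h.2, if_neg hcase, Finset.prod_insert hnm]
      have : (∫ ω, g e' (X e' ω) ∂P) = 0 := by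
        rw [hgdef]; simp only [Function.update_self]; exact hmean e'
      rw [this, zero_mul]
  -- products of two X's
  have hXXint : ∀ e e' : Fin b × Fin b, Integrable (fun ω => X e ω * X e' ω) P := by
    intro e e'
    by_cases h : e = e'
    · subst h
      have : (fun ω => X e ω * X e ω) = fun ω => X e ω ^ 2 := by funext ω; ring
      rw [this]; exact hintX2 e
    · exact (hindep.indepFun h).integrable_mul (hintX e) (hintX e')
  have hXXval : ∀ e e' : Fin b × Fin b, ∫ ω, X e ω * X e' ω ∂P = if e = e' then σ ^ 2 else 0 := by
    intro e e'
    by_cases h : e = e'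
    · subst h
      rw [if_pos rfl]
      have : (fun ω => X e ω * X e ω) = fun ω => X e ω ^ 2 := by funext ω; ring
      rw [this]; exact hX2 e
    · rw [if_neg h]
      have := (hindep.indepFun h).integral_mul_eq_mul_integral (hintX e).aestronglyMeasurable (hintX e').aestronglyMeasurable
      calc ∫ ω, X e ω * X e' ω ∂P = ∫ ω, (X e * X e') ω ∂P := rfl
        _ = (∫ ω, X e ω ∂P) * ∫ ω, X e' ω ∂P := this
        _ = 0 := by rw [hmean e, hmean e']; ring
  -- centered row products
  have hWint : ∀ i, Integrable (fun ω => Pr i ω - 1) P :=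
    fun i => (hPrA i).1.sub (integrable_const 1)
  have hWmean : ∀ i, ∫ ω, (Pr i ω - 1) ∂P = 0 := by
    intro i
    rw [integral_sub (hPrA i).1 (integrable_const 1), (hPrA i).2]
    simp
  have hXWint : ∀ (e' : Fin b × Fin b) (i : Fin b),
      Integrable (fun ω => X e' ω * (Pr i ω - 1)) P := by
    intro e' i
    have hfe : (fun ω => X e' ω * (Pr i ω - 1)) = fun ω => X e' ω * Pr i ω - X e' ω := by
      funext ω; ring
    rw [hfe]
    exact (hXPr i e').1.sub (hintX e')
  have hXWval : ∀ (e' : Fin b × Fin b) (i : Fin b),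
      ∫ ω, X e' ω * (Pr i ω - 1) ∂P = if e'.1 = i then σ ^ 2 else 0 := by
    intro e' i
    have hfe : (fun ω => X e' ω * (Pr i ω - 1)) = fun ω => X e' ω * Pr i ω - X e' ω := by
      funext ω; ring
    rw [hfe, integral_sub (hXPr i e').1 (hintX e'), (hXPr i e').2, hmean e', sub_zero]
  have hWWint : ∀ i i' : Fin b, Integrable (fun ω => (Pr i ω - 1) * (Pr i' ω - 1)) P := by
    intro i i'
    have hPP : Integrable (fun ω => Pr i ω * Pr i' ω) P := by
      by_cases h : i = i'
      · subst h
        have : (fun ω => Pr i ω * Pr i ω) = fun ω => Pr i ω ^ 2 := by funext ω; ring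
        rw [this]; exact (hPrB i).1
      · exact (hPrC i i' h).1
    have hfe : (fun ω => (Pr i ω - 1) * (Pr i' ω - 1))
        = fun ω => Pr i ω * Pr i' ω - Pr i ω - Pr i' ω + 1 := by
      funext ω; ring
    rw [hfe]
    exact ((hPP.sub (hPrA i).1).sub (hPrA i').1).add (integrable_const 1)
  have hWWval : ∀ i i' : Fin b, ∫ ω, (Pr i ω - 1) * (Pr i' ω - 1) ∂P
      = if i = i' then (1 + σ ^ 2) ^ b - 1 else 0 := by
    intro i i'
    have hPP : Integrable (fun ω => Pr i ω * Pr i' ω) P := by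
      by_cases h : i = i'
      · subst h
        have : (fun ω => Pr i ω * Pr i ω) = fun ω => Pr i ω ^ 2 := by funext ω; ring
        rw [this]; exact (hPrB i).1
      · exact (hPrC i i' h).1
    have hPPval : ∫ ω, Pr i ω * Pr i' ω ∂P = if i = i' then (1 + σ ^ 2) ^ b else 1 := by
      by_cases h : i = i'
      · subst h
        rw [if_pos rfl]
        have : (fun ω => Pr i ω * Pr i ω) = fun ω => Pr i ω ^ 2 := by funext ω; ring
        rw [this]; exact (hPrB i).2
      · rw [if_neg h]; exact (hPrC i i' h).2
    have hfe : (fun ω => (Pr i ω - 1) * (Pr i' ω - 1))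
        = fun ω => Pr i ω * Pr i' ω - Pr i ω - Pr i' ω + 1 := by
      funext ω; ring
    have hA : Integrable (fun ω => Pr i ω * Pr i' ω - Pr i ω) P := hPP.sub (hPrA i).1
    have hB : Integrable (fun ω => Pr i ω * Pr i' ω - Pr i ω - Pr i' ω) P := hA.sub (hPrA i').1
    rw [hfe, integral_add hB (integrable_const 1), integral_sub hA (hPrA i').1,
      integral_sub hPP (hPrA i).1, hPPval, (hPrA i).2, (hPrA i').2]
    by_cases h : i = i'
    · rw [if_pos h, if_pos h]; simp
    · rw [if_neg h, if_neg h]; simp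
  -- rewrite w and y
  have hwdef : w = fun ω => (1 / (b : ℝ)) * ∑ i : Fin b, (Pr i ω - 1) := hw
  have hy' : y = fun ω => (1 / (b : ℝ)) * ∑ e : Fin b × Fin b, X e ω := by
    rw [hy]; funext ω; rw [Fintype.sum_prod_type]
  -- integrability and means of w, y, z
  have hyint : Integrable y P := by
    rw [hy']
    exact (integrable_finset_sum _ fun e _ => hintX e).const_mul _
  have hymean : ∫ ω, y ω ∂P = 0 := by
    rw [hy', integral_const_mul, integral_finset_sum _ fun e _ => hintX e]
    simp [hmean]
  have hwint : Integrable w P := by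
    rw [hwdef]
    exact (integrable_finset_sum _ fun i _ => hWint i).const_mul _
  have hwmean : ∫ ω, w ω ∂P = 0 := by
    rw [hwdef, integral_const_mul, integral_finset_sum _ fun i _ => hWint i]
    simp [hWmean]
  have hzmean : ∫ ω, z ω ∂P = 0 := by
    rw [hz, integral_sub hwint hyint, hwmean, hymean, sub_zero]
  -- second moments
  have hyyP : Integrable (fun ω => y ω * y ω) P ∧ ∫ ω, y ω * y ω ∂P = σ ^ 2 := by
    have hfun : (fun ω => y ω * y ω)
        = fun ω => (1 / (b : ℝ)) * ((1 / (b : ℝ)) *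
            ∑ e : Fin b × Fin b, ∑ e' : Fin b × Fin b, X e ω * X e' ω) := by
      funext ω
      rw [hy']
      rw [← Finset.sum_mul_sum]
      ring
    have hint2 : Integrable
        (fun ω => ∑ e : Fin b × Fin b, ∑ e' : Fin b × Fin b, X e ω * X e' ω) P :=
      integrable_finset_sum _ fun e _ => integrable_finset_sum _ fun e' _ => hXXint e e'
    constructor
    · rw [hfun]; exact (hint2.const_mul _).const_mul _
    · rw [hfun, integral_const_mul, integral_const_mul,
        integral_finset_sum _ fun e _ => integrable_finset_sum _ fun e' _ => hXXint e e']
      have hrow : ∀ e : Fin b × Fin b,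
          ∫ ω, ∑ e' : Fin b × Fin b, X e ω * X e' ω ∂P = σ ^ 2 := by
        intro e
        rw [integral_finset_sum _ fun e' _ => hXXint e e']
        rw [Finset.sum_congr rfl fun e' _ => hXXval e e']
        simp
      rw [Finset.sum_congr rfl fun e _ => hrow e, Finset.sum_const]
      have hcard2 : (Finset.univ : Finset (Fin b × Fin b)).card = b * b := by simp
      rw [hcard2, nsmul_eq_mul]
      push_cast
      field_simp
  have hywP : Integrable (fun ω => y ω * w ω) P ∧ ∫ ω, y ω * w ω ∂P = σ ^ 2 := by
    have hfun : (fun ω => y ω * w ω)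
        = fun ω => (1 / (b : ℝ)) * ((1 / (b : ℝ)) *
            ∑ e : Fin b × Fin b, ∑ i : Fin b, X e ω * (Pr i ω - 1)) := by
      funext ω
      rw [hy', hwdef]
      rw [← Finset.sum_mul_sum]
      ring
    have hint2 : Integrable
        (fun ω => ∑ e : Fin b × Fin b, ∑ i : Fin b, X e ω * (Pr i ω - 1)) P :=
      integrable_finset_sum _ fun e _ => integrable_finset_sum _ fun i _ => hXWint e i
    constructor
    · rw [hfun]; exact (hint2.const_mul _).const_mul _
    · rw [hfun, integral_const_mul, integral_const_mul,
        integral_finset_sum _ fun e _ => integrable_finset_sum _ fun i _ => hXWint e i]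
      have hrow : ∀ e : Fin b × Fin b,
          ∫ ω, ∑ i : Fin b, X e ω * (Pr i ω - 1) ∂P = σ ^ 2 := by
        intro e
        rw [integral_finset_sum _ fun i _ => hXWint e i,
          Finset.sum_congr rfl fun i _ => hXWval e i]
        simp
      rw [Finset.sum_congr rfl fun e _ => hrow e, Finset.sum_const]
      have hcard2 : (Finset.univ : Finset (Fin b × Fin b)).card = b * b := by simp
      rw [hcard2, nsmul_eq_mul]
      push_cast
      field_simp
  have hwwP : Integrable (fun ω => w ω * w ω) P ∧
      ∫ ω, w ω * w ω ∂P = ((1 + σ ^ 2) ^ b - 1) / b := by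
    have hfun : (fun ω => w ω * w ω)
        = fun ω => (1 / (b : ℝ)) * ((1 / (b : ℝ)) *
            ∑ i : Fin b, ∑ i' : Fin b, (Pr i ω - 1) * (Pr i' ω - 1)) := by
      funext ω
      rw [hwdef]
      rw [← Finset.sum_mul_sum]
      ring
    have hint2 : Integrable
        (fun ω => ∑ i : Fin b, ∑ i' : Fin b, (Pr i ω - 1) * (Pr i' ω - 1)) P :=
      integrable_finset_sum _ fun i _ => integrable_finset_sum _ fun i' _ => hWWint i i'
    constructor
    · rw [hfun]; exact (hint2.const_mul _).const_mul _
    · rw [hfun, integral_const_mul, integral_const_mul,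
        integral_finset_sum _ fun i _ => integrable_finset_sum _ fun i' _ => hWWint i i']
      have hrow : ∀ i : Fin b,
          ∫ ω, ∑ i' : Fin b, (Pr i ω - 1) * (Pr i' ω - 1) ∂P = (1 + σ ^ 2) ^ b - 1 := by
        intro i
        rw [integral_finset_sum _ fun i' _ => hWWint i i',
          Finset.sum_congr rfl fun i' _ => hWWval i i']
        simp
      rw [Finset.sum_congr rfl fun i _ => hrow i, Finset.sum_const]
      have hcard1 : (Finset.univ : Finset (Fin b)).card = b := by simp
      rw [hcard1, nsmul_eq_mul]
      field_simp
  -- conclusion 1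
  have hyzval : ∫ ω, y ω * z ω ∂P = 0 := by
    have hfe : (fun ω => y ω * z ω) = fun ω => y ω * w ω - y ω * y ω := by
      funext ω; rw [hz]; ring
    rw [hfe, integral_sub hywP.1 hyyP.1, hywP.2, hyyP.2, sub_self]
  -- measurability of z
  have hwm : Measurable w := by
    rw [hw]
    exact measurable_const.mul (Finset.measurable_sum _ fun i _ =>
      (Finset.measurable_prod _ fun j _ => measurable_const.add (hmeas (i, j))).sub
        measurable_const)
  have hym : Measurable y := by
    rw [hy]
    exact measurable_const.mul (Finset.measurable_sum _ fun i _ =>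
      Finset.measurable_sum _ fun j _ => hmeas (i, j))
  have hzm : Measurable z := by
    rw [hz]; exact hwm.sub hym
  -- z squared
  have hz2fun : (fun ω => z ω ^ 2)
      = fun ω => w ω * w ω - 2 * (y ω * w ω) + y ω * y ω := by
    funext ω; rw [hz]; ring
  have hz2int : Integrable (fun ω => z ω ^ 2) P := by
    rw [hz2fun]
    exact (hwwP.1.sub (hywP.1.const_mul 2)).add hyyP.1
  have hz2val : ∫ ω, z ω ^ 2 ∂P = ((1 + σ ^ 2) ^ b - 1) / b - σ ^ 2 := by
    have hB : Integrable (fun ω => (2:ℝ) * (y ω * w ω)) P := hywP.1.const_mul 2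
    have hA : Integrable (fun ω => w ω * w ω - 2 * (y ω * w ω)) P := hwwP.1.sub hB
    rw [hz2fun, integral_add hA hyyP.1, integral_sub hwwP.1 hB, integral_const_mul,
      hwwP.2, hywP.2, hyyP.2]
    ring
  have hzL2 : MemLp z 2 P :=
    (memLp_two_iff_integrable_sq hzm.aestronglyMeasurable).2 hz2int
  refine ⟨by rw [hyzval, hymean, hzmean, mul_zero], hzmean, ?_⟩
  rw [variance_eq_sub hzL2]
  have h1 : ∫ ω, (z ^ 2) ω ∂P = ((1 + σ ^ 2) ^ b - 1) / b - σ ^ 2 := by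
    simpa only [Pi.pow_apply] using hz2val
  rw [h1]
  rw [show (∫ ω, z ω ∂P) = 0 from hzmean]
  ring
end

section
/- The partition function of the bond-disorder directed polymer on the diamond graph satisfies W_n^ω(β) = 1 + Q^n{X_h^{(n)}}_{h∈E_n}, where X_h^{(n)} = e^{βω_h}/E[e^{βω_h}] − 1. Equivalently, the normalized sum over directed paths of the product of normalized weights equals the n-fold application of the map Q to the weight array, plus 1. -/
/-- Directed paths on the generation-`n` diamond graph with `b = s`. -/
def DPath (b : ℕ) : ℕ → Type
  | 0 => PUnit
  | n + 1 => Fin b × (Fin b → DPath b n)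

def dpathFintype (b : ℕ) : ∀ n, Fintype (DPath b n)
  | 0 => inferInstanceAs (Fintype PUnit)
  | n + 1 =>
    letI := dpathFintype b n
    inferInstanceAs (Fintype (Fin b × (Fin b → DPath b n)))

instance (b n : ℕ) : Fintype (DPath b n) := dpathFintype b n

/-- `memEdge b n e p`: the edge with hierarchical address `e` (coarsest
generation first) lies along the directed path `p`. -/
def memEdge (b : ℕ) : ∀ n, (Fin n → Fin b × Fin b) → DPath b n → Prop
  | 0, _, _ => True
  | n + 1, e, p => (e 0).1 = p.1 ∧ memEdge b n (fun k => e k.succ) (p.2 (e 0).2)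

def memEdgeDec (b : ℕ) :
    ∀ (n : ℕ) (e : Fin n → Fin b × Fin b) (p : DPath b n), Decidable (memEdge b n e p)
  | 0, _, _ => isTrue trivial
  | n + 1, e, p =>
    haveI : Decidable (memEdge b n (fun k => e k.succ) (p.2 (e 0).2)) := memEdgeDec b n _ _
    inferInstanceAs
      (Decidable ((e 0).1 = p.1 ∧ memEdge b n (fun k => e k.succ) (p.2 (e 0).2)))

instance (b n : ℕ) (e : Fin n → Fin b × Fin b) (p : DPath b n) :
    Decidable (memEdge b n e p) := memEdgeDec b n e p

/-- One application of the map `Q`, contracting a generation-`(n+1)` array to a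
generation-`n` array: `(Q x)_a = (1/b)·Σ_i (∏_j (1 + x_{a×(i,j)}) − 1)`. -/
noncomputable def Qstep (b n : ℕ) (x : (Fin (n + 1) → Fin b × Fin b) → ℝ) :
    (Fin n → Fin b × Fin b) → ℝ :=
  fun a => (1 / (b : ℝ)) * ∑ i : Fin b, (∏ j : Fin b, (1 + x (Fin.snoc a (i, j))) - 1)

/-- `Q^n` applied to a generation-`n` array, yielding a single number. -/
noncomputable def Qiter (b : ℕ) : ∀ n, ((Fin n → Fin b × Fin b) → ℝ) → ℝ
  | 0, x => x (fun i => i.elim0)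
  | n + 1, x => Qiter b n (Qstep b n x)

instance memEdgeDecPair (b n : ℕ) (e : Fin (n + 1) → Fin b × Fin b)
    (x : Fin b × (Fin b → DPath b n)) :
    Decidable (memEdge b (n + 1) e x) := memEdgeDec b (n + 1) e x

lemma qiter_cons (b : ℕ) : ∀ (n : ℕ) (x : (Fin (n + 1) → Fin b × Fin b) → ℝ),
    Qiter b (n + 1) x
      = (1 / (b : ℝ)) * ∑ i : Fin b,
          (∏ j : Fin b, (1 + Qiter b n (fun a => x (Fin.cons (i, j) a))) - 1)
  | 0, x => by
    simp only [Qiter, Qstep]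
    congr 1
    refine Finset.sum_congr rfl fun i _ => ?_
    congr 1
    refine Finset.prod_congr rfl fun j _ => ?_
    congr 1
    congr 1
    funext k
    fin_cases k
    simp [Fin.snoc, Fin.cons]
  | n + 1, x => by
    have h : ∀ i j : Fin b,
        (fun a => (Qstep b (n + 1) x) (Fin.cons (i, j) a))
          = Qstep b n (fun a => x (Fin.cons (i, j) a)) := by
      intro i j
      funext a
      simp only [Qstep]
      congr 1
      refine Finset.sum_congr rfl fun k _ => ?_
      congr 1
      refine Finset.prod_congr rfl fun l _ => ?_
      rw [Fin.cons_snoc_eq_snoc_cons]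
    rw [show Qiter b (n + 1 + 1) x = Qiter b (n + 1) (Qstep b (n + 1) x) from rfl,
      qiter_cons b n (Qstep b (n + 1) x)]
    congr 1
    refine Finset.sum_congr rfl fun i _ => ?_
    congr 1
    refine Finset.prod_congr rfl fun j _ => ?_
    rw [h i j]
    rfl

lemma card_dpath_ne (b : ℕ) (hb : 1 ≤ b) (n : ℕ) :
    (Fintype.card (DPath b n) : ℝ) ≠ 0 := by
  have : Nonempty (DPath b n) := by
    induction n with
    | zero => exact ⟨PUnit.unit⟩
    | succ n ih => exact ⟨(⟨0, hb⟩, fun _ => ih.some)⟩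
  simp

lemma key (b : ℕ) (hb : 1 ≤ b) : ∀ (n : ℕ) (y : (Fin n → Fin b × Fin b) → ℝ),
    (1 / (Fintype.card (DPath b n) : ℝ)) *
        ∑ p : DPath b n,
          ∏ e ∈ Finset.univ.filter (fun e => memEdge b n e p), y e
      = 1 + Qiter b n (fun e => y e - 1) := by
  intro n
  induction n with
  | zero =>
    intro y
    have h1 : Fintype.card (DPath b 0) = 1 := rfl
    rw [h1]
    have hf : ∀ p : DPath b 0,
        (Finset.univ.filter (fun e => memEdge b 0 e p)) = Finset.univ := by
      intro p; simp [memEdge]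
    letI : Unique (DPath b 0) := inferInstanceAs (Unique PUnit)
    letI : Unique (Fin 0 → Fin b × Fin b) := inferInstance
    simp only [hf]
    rw [Fintype.sum_unique, Fintype.prod_unique]
    norm_num [Qiter]
    exact congrArg y (funext fun i => i.elim0).symm
  | succ n ih =>
    intro y
    set C : ℝ := (Fintype.card (DPath b n) : ℝ) with hCdef
    have hC : C ≠ 0 := card_dpath_ne b hb n
    have hb' : (b : ℝ) ≠ 0 := by
      exact_mod_cast Nat.one_le_iff_ne_zero.mp hb
    have hcard : (Fintype.card (DPath b (n+1)) : ℝ) = (b : ℝ) * C ^ b := by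
      have h : Fintype.card (DPath b (n+1))
          = Fintype.card (Fin b × (Fin b → DPath b n)) := rfl
      have h2 : Fintype.card (DPath b (n+1))
          = b * (Fintype.card (DPath b n)) ^ b := by
        rw [h, Fintype.card_prod, Fintype.card_fun, Fintype.card_fin]
      rw [h2]; push_cast; ring
    have hsum : (∑ p : DPath b (n+1),
          ∏ e ∈ Finset.univ.filter (fun e => memEdge b (n+1) e p), y e)
        = ∑ i : Fin b, ∑ q : Fin b → DPath b n,
            ∏ e ∈ Finset.univ.filter (fun e => memEdge b (n+1) e (i, q)), y e :=
      Fintype.sum_prod_type (f := fun (x : Fin b × (Fin b → DPath b n)) =>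
        ∏ e ∈ Finset.univ.filter (fun e => memEdge b (n+1) e x), y e)
    have hprod : ∀ (i : Fin b) (q : Fin b → DPath b n),
        (∏ e ∈ Finset.univ.filter (fun e => memEdge b (n+1) e (i, q)), y e)
          = ∏ j : Fin b,
              ∏ t ∈ Finset.univ.filter (fun t => memEdge b n t (q j)),
                y (Fin.cons (i, j) t) := by
      intro i q
      rw [Finset.prod_filter]
      rw [← (Fin.consEquiv (fun _ : Fin (n+1) => Fin b × Fin b)).prod_comp
          (fun e => if memEdge b (n+1) e (i, q) then y e else 1)]
      rw [Fintype.prod_prod_type]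
      show (∏ v : Fin b × Fin b, ∏ t : Fin n → Fin b × Fin b,
          if memEdge b (n+1) (Fin.cons v t) (i, q) then y (Fin.cons v t) else 1) = _
      have hm : ∀ (v : Fin b × Fin b) (t : Fin n → Fin b × Fin b),
          memEdge b (n+1) (Fin.cons v t) (i, q) ↔ (v.1 = i ∧ memEdge b n t (q v.2)) := by
        intro v t
        simp [memEdge, Fin.cons_succ]
      simp only [hm]
      rw [Fintype.prod_prod_type]
      rw [Finset.prod_eq_single i]
      · refine Finset.prod_congr rfl fun j _ => ?_
        rw [Finset.prod_filter]
        simp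
      · intro k _ hk
        refine Finset.prod_eq_one fun j _ => Finset.prod_eq_one fun t _ => ?_
        simp [hk]
      · intro h; exact absurd (Finset.mem_univ i) h
    have hpi : ∀ i : Fin b,
        (∑ q : Fin b → DPath b n, ∏ j : Fin b,
            ∏ t ∈ Finset.univ.filter (fun t => memEdge b n t (q j)),
              y (Fin.cons (i, j) t))
          = ∏ j : Fin b, ∑ p : DPath b n,
              ∏ t ∈ Finset.univ.filter (fun t => memEdge b n t p),
                y (Fin.cons (i, j) t) := by
      intro i
      rw [Finset.prod_univ_sum]
      rw [Fintype.piFinset_univ]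
    have hih : ∀ (i j : Fin b),
        (∑ p : DPath b n, ∏ t ∈ Finset.univ.filter (fun t => memEdge b n t p),
            y (Fin.cons (i, j) t))
          = C * (1 + Qiter b n (fun t => y (Fin.cons (i, j) t) - 1)) := by
      intro i j
      have := ih (fun t => y (Fin.cons (i, j) t))
      field_simp at this ⊢
      linarith [this]
    rw [hsum, hcard]
    simp only [hprod]
    simp only [hpi]
    simp only [hih]
    rw [qiter_cons]
    have hexp : ∀ i : Fin b,
        (∏ j : Fin b, C * (1 + Qiter b n (fun t => y (Fin.cons (i, j) t) - 1)))
          = C ^ b * ∏ j : Fin b,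
              (1 + Qiter b n (fun t => y (Fin.cons (i, j) t) - 1)) := by
      intro i
      rw [Finset.prod_mul_distrib, Finset.prod_const, Finset.card_univ, Fintype.card_fin]
    simp only [hexp]
    rw [Finset.mul_sum, Finset.mul_sum]
    have hterm : ∀ i : Fin b,
        1 / ((b:ℝ) * C ^ b) * (C ^ b *
            ∏ j : Fin b, (1 + Qiter b n (fun t => y (Fin.cons (i, j) t) - 1)))
          = 1 / (b:ℝ) * ∏ j : Fin b,
              (1 + Qiter b n (fun t => y (Fin.cons (i, j) t) - 1)) := by
      intro i
      have hCb : C ^ b ≠ 0 := pow_ne_zero _ hC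
      field_simp
    simp only [hterm]
    have : ∀ i : Fin b,
        (1:ℝ) / b * (∏ j : Fin b,
            (1 + Qiter b n (fun a => y (Fin.cons (i, j) a) - 1)) - 1)
          = 1 / b * ∏ j : Fin b,
              (1 + Qiter b n (fun t => y (Fin.cons (i, j) t) - 1)) - 1 / b := by
      intro i; ring
    simp only [this]
    rw [Finset.sum_sub_distrib, Finset.sum_const, Finset.card_univ, Fintype.card_fin]
    have : (b : ℝ) ≠ 0 := by exact_mod_cast Nat.one_le_iff_ne_zero.mp hb
    field_simp
    rw [nsmul_eq_mul, mul_one_div_cancel this]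
    ring

/-- The bond-disorder partition function identity
`W_n^ω(β) = 1 + Q^n{X_h^{(n)}}` with `X_h^{(n)} = e^{βω_h}/E[e^{βω_h}] − 1`:
the normalized sum over directed paths of the product of normalized weights
equals `1` plus the `n`-fold application of `Q` to the centered weight array. -/
theorem stmt6 (b n : ℕ) (hb : 1 ≤ b) (β : ℝ)
    (ω : (Fin n → Fin b × Fin b) → ℝ)
    (c : (Fin n → Fin b × Fin b) → ℝ) (hc : ∀ e, c e ≠ 0) :
    (1 / (Fintype.card (DPath b n) : ℝ)) *
        ∑ p : DPath b n,
          ∏ e ∈ Finset.univ.filter (fun e => memEdge b n e p), Real.exp (β * ω e) / c e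
      = 1 + Qiter b n (fun e => Real.exp (β * ω e) / c e - 1) := by
  exact key b hb n (fun e => Real.exp (β * ω e) / c e)
end

section
/- Let X and Y be random variables with finite (m+1)-th absolute moments for some m ∈ ℕ. Then the Wasserstein-2 distance is bounded via the Wasserstein-1 distance by ρ₂(X,Y) ≤ 2^{(m+1)/(2m)} · (ρ₁(X,Y))^{(m−1)/(2m)} · (E[|X|^{m+1}]^{1/(2m)} + E[|Y|^{m+1}]^{1/(2m)}). -/
open MeasureTheory
open scoped NNReal ENNReal

/-- The Wasserstein-`p` distance between two Borel measures on `ℝ`: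
the infimum over couplings `π` (measures on `ℝ²` with the given marginals)
of `(∫ |x−y|^p dπ)^{1/p}`. -/
noncomputable def rhoW (p : ℝ) (μ ν : Measure ℝ) : ℝ :=
  sInf { c | ∃ π : Measure (ℝ × ℝ),
    π.map Prod.fst = μ ∧ π.map Prod.snd = ν ∧
    c = (∫ z, |z.1 - z.2| ^ p ∂π) ^ (1 / p) }

lemma myRpowAdd {a b p : ℝ} (ha : 0 ≤ a) (hb : 0 ≤ b) (hp : 0 ≤ p) (hp1 : p ≤ 1) :
    (a + b) ^ p ≤ a ^ p + b ^ p := by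
  have h := NNReal.rpow_add_le_add_rpow (a.toNNReal) (b.toNNReal) hp hp1
  have h2 : ((a.toNNReal + b.toNNReal : ℝ≥0) : ℝ) ^ p ≤
      ((a.toNNReal : ℝ)) ^ p + ((b.toNNReal : ℝ)) ^ p := by
    rw [← NNReal.coe_rpow, ← NNReal.coe_rpow, ← NNReal.coe_rpow, ← NNReal.coe_add]
    exact_mod_cast h
  simpa [Real.coe_toNNReal a ha, Real.coe_toNNReal b hb] using h2

lemma myPowAdd (a b : ℝ) (ha : 0 ≤ a) (hb : 0 ≤ b) (n : ℕ) :
    (a + b) ^ n ≤ 2 ^ n * (a ^ n + b ^ n) := by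
  have h1 : a + b ≤ 2 * max a b := by
    rcases le_total a b with h | h
    · simp [max_eq_right h]; linarith
    · simp [max_eq_left h]; linarith
  calc (a + b) ^ n ≤ (2 * max a b) ^ n :=
        pow_le_pow_left₀ (add_nonneg ha hb) h1 n
    _ = 2 ^ n * (max a b) ^ n := mul_pow 2 _ n
    _ ≤ 2 ^ n * (a ^ n + b ^ n) := by
        have h3 : (max a b) ^ n ≤ a ^ n + b ^ n := by
          rcases le_total a b with h | h
          · rw [max_eq_right h]; nlinarith [pow_nonneg ha n]
          · rw [max_eq_left h]; nlinarith [pow_nonneg hb n]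
        have h4 : (0:ℝ) ≤ 2 ^ n := by positivity
        exact mul_le_mul_of_nonneg_left h3 h4

lemma myIntegrablePow {α : Type*} [MeasurableSpace α] {μ : Measure α} [IsProbabilityMeasure μ]
    {g : α → ℝ} (hg : Measurable g) (hg0 : ∀ x, 0 ≤ g x) {n k : ℕ} (hk : k ≤ n)
    (hn : Integrable (fun x => g x ^ n) μ) : Integrable (fun x => g x ^ k) μ := by
  apply Integrable.mono' ((integrable_const (1 : ℝ)).add hn)
  · exact (hg.pow_const k).aestronglyMeasurable
  · filter_upwards with x
    simp only [Pi.add_apply]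
    rw [Real.norm_eq_abs, abs_of_nonneg (pow_nonneg (hg0 x) k)]
    rcases le_total (g x) 1 with h | h
    · have h1 : g x ^ k ≤ 1 := pow_le_one₀ (hg0 x) h
      have h2 : 0 ≤ g x ^ n := pow_nonneg (hg0 x) n
      linarith
    · have h1 : g x ^ k ≤ g x ^ n := pow_le_pow_right₀ h hk
      linarith

lemma myHolder (m : ℕ) (hm : 1 ≤ m) {α : Type*} [MeasurableSpace α] {π : Measure α}
    [IsProbabilityMeasure π] {f : α → ℝ} (hf : Measurable f) (hf0 : ∀ z, 0 ≤ f z)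
    (hIm : Integrable (fun z => f z ^ (m + 1)) π) :
    ∫ z, f z ^ 2 ∂π ≤
      (∫ z, f z ^ (m + 1) ∂π) ^ ((1 : ℝ) / m) * (∫ z, f z ∂π) ^ (((m : ℝ) - 1) / m) := by
  rcases eq_or_lt_of_le hm with hm1 | hm2
  · subst hm1
    norm_num
  · -- 2 ≤ m
    have hm1R : (1 : ℝ) < m := by exact_mod_cast hm2
    have hmpos : (0 : ℝ) < m := by linarith
    have hm1pos : (0 : ℝ) < (m : ℝ) - 1 := by linarith
    set a : ℝ := ((m : ℝ) + 1) / m with ha_def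
    set b : ℝ := ((m : ℝ) - 1) / m with hb_def
    have ha_pos : 0 < a := by positivity
    have hb_pos : 0 < b := by positivity
    have hconj : (m : ℝ).HolderConjugate ((m : ℝ) / ((m : ℝ) - 1)) := by
      have := Real.HolderConjugate.conjExponent hm1R
      simpa [Real.conjExponent] using this
    have hI1 : Integrable f π := by
      have := myIntegrablePow hf hf0 (show 1 ≤ m + 1 by omega) hIm
      simpa using this
    -- Memℒp f (m+1)
    have hfLp : MemLp f (ENNReal.ofReal ((m : ℝ) + 1)) π := by
      have hne0 : ENNReal.ofReal ((m : ℝ) + 1) ≠ 0 := by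
        simp [ENNReal.ofReal_eq_zero]; linarith
      have hnetop : ENNReal.ofReal ((m : ℝ) + 1) ≠ ⊤ := ENNReal.ofReal_ne_top
      refine (memLp_norm_rpow_iff hf.aestronglyMeasurable hne0 hnetop).1 ?_
      rw [ENNReal.div_self hne0 hnetop, memLp_one_iff_integrable]
      have heq : (fun z => ‖f z‖ ^ (ENNReal.ofReal ((m : ℝ) + 1)).toReal)
          = fun z => f z ^ (m + 1) := by
        funext z
        rw [ENNReal.toReal_ofReal (by positivity), Real.norm_eq_abs, abs_of_nonneg (hf0 z)]
        rw [show ((m : ℝ) + 1) = ((m + 1 : ℕ) : ℝ) by push_cast; ring, Real.rpow_natCast]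
      rw [heq]; exact hIm
    have hp_mem : MemLp (fun z => f z ^ a) (ENNReal.ofReal (m : ℝ)) π := by
      have h := hfLp.norm_rpow_div (ENNReal.ofReal a)
      have hexp : ENNReal.ofReal ((m : ℝ) + 1) / ENNReal.ofReal a = ENNReal.ofReal (m : ℝ) := by
        rw [← ENNReal.ofReal_div_of_pos ha_pos]
        congr 1
        rw [ha_def]
        field_simp
      have hfun : (fun z => ‖f z‖ ^ (ENNReal.ofReal a).toReal) = fun z => f z ^ a := by
        funext z
        rw [ENNReal.toReal_ofReal ha_pos.le, Real.norm_eq_abs, abs_of_nonneg (hf0 z)]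
      rwa [hexp, hfun] at h
    have hq_mem : MemLp (fun z => f z ^ b) (ENNReal.ofReal ((m : ℝ) / ((m : ℝ) - 1))) π := by
      have h1 : MemLp f 1 π := memLp_one_iff_integrable.2 hI1
      have h := h1.norm_rpow_div (ENNReal.ofReal b)
      have hexp : (1 : ℝ≥0∞) / ENNReal.ofReal b = ENNReal.ofReal ((m : ℝ) / ((m : ℝ) - 1)) := by
        rw [one_div, ← ENNReal.ofReal_inv_of_pos hb_pos]
        congr 1
        rw [hb_def, inv_div]
      have hfun : (fun z => ‖f z‖ ^ (ENNReal.ofReal b).toReal) = fun z => f z ^ b := by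
        funext z
        rw [ENNReal.toReal_ofReal hb_pos.le, Real.norm_eq_abs, abs_of_nonneg (hf0 z)]
      rwa [hexp, hfun] at h
    have hH := integral_mul_le_Lp_mul_Lq_of_nonneg hconj
      (Filter.Eventually.of_forall fun z => Real.rpow_nonneg (hf0 z) a)
      (Filter.Eventually.of_forall fun z => Real.rpow_nonneg (hf0 z) b)
      hp_mem hq_mem
    have e1 : ∀ z, f z ^ a * f z ^ b = f z ^ 2 := by
      intro z
      have hab : a + b = 2 := by
        rw [ha_def, hb_def, ← add_div, div_eq_iff hmpos.ne']
        ring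
      rw [← Real.rpow_add' (hf0 z) (by rw [hab]; norm_num), hab]
      exact_mod_cast Real.rpow_natCast (f z) 2
    have e2 : ∀ z, (f z ^ a) ^ (m : ℝ) = f z ^ (m + 1) := by
      intro z
      rw [← Real.rpow_mul (hf0 z)]
      have : a * m = ((m + 1 : ℕ) : ℝ) := by
        rw [ha_def]
        push_cast
        field_simp
      rw [this, Real.rpow_natCast]
    have e3 : ∀ z, (f z ^ b) ^ ((m : ℝ) / ((m : ℝ) - 1)) = f z := by
      intro z
      rw [← Real.rpow_mul (hf0 z)]
      have : b * ((m : ℝ) / ((m : ℝ) - 1)) = 1 := by rw [hb_def]; field_simp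
      rw [this, Real.rpow_one]
    have e4 : 1 / ((m : ℝ) / ((m : ℝ) - 1)) = ((m : ℝ) - 1) / m := one_div_div _ _
    simp_rw [e1, e2, e3, e4] at hH
    exact hH

lemma myKey (m : ℕ) (hm : 1 ≤ m) {α : Type*} [MeasurableSpace α] {π : Measure α}
    [IsProbabilityMeasure π] {f : α → ℝ} (hf : Measurable f) (hf0 : ∀ z, 0 ≤ f z)
    (hIm : Integrable (fun z => f z ^ (m + 1)) π) :
    (∫ z, f z ^ (2 : ℝ) ∂π) ^ ((1 : ℝ) / 2) ≤
      (∫ z, f z ^ (m + 1) ∂π) ^ (1 / (2 * (m : ℝ))) *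
      (∫ z, f z ∂π) ^ (((m : ℝ) - 1) / (2 * (m : ℝ))) := by
  have hu0 : 0 ≤ ∫ z, f z ^ (m + 1) ∂π := integral_nonneg fun z => pow_nonneg (hf0 z) _
  have hv0 : 0 ≤ ∫ z, f z ∂π := integral_nonneg hf0
  have h2eq : (fun z => f z ^ (2 : ℝ)) = fun z => f z ^ (2 : ℕ) := by
    funext z
    exact_mod_cast Real.rpow_natCast (f z) 2
  rw [h2eq]
  have hH := myHolder m hm hf hf0 hIm
  have h20 : 0 ≤ ∫ z, f z ^ (2 : ℕ) ∂π := integral_nonneg fun z => pow_nonneg (hf0 z) _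
  calc (∫ z, f z ^ (2 : ℕ) ∂π) ^ ((1 : ℝ) / 2)
      ≤ ((∫ z, f z ^ (m + 1) ∂π) ^ ((1 : ℝ) / m) *
          (∫ z, f z ∂π) ^ (((m : ℝ) - 1) / m)) ^ ((1 : ℝ) / 2) :=
        Real.rpow_le_rpow h20 hH (by norm_num)
    _ = (∫ z, f z ^ (m + 1) ∂π) ^ (1 / (2 * (m : ℝ))) *
          (∫ z, f z ∂π) ^ (((m : ℝ) - 1) / (2 * (m : ℝ))) := by
        rw [Real.mul_rpow (Real.rpow_nonneg hu0 _) (Real.rpow_nonneg hv0 _),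
          ← Real.rpow_mul hu0, ← Real.rpow_mul hv0]
        congr 1
        · congr 1; ring
        · congr 1; ring

/-- For random variables `X, Y` with finite `(m+1)`-th absolute moments,
`ρ₂(X,Y) ≤ 2^{(m+1)/(2m)}·ρ₁(X,Y)^{(m−1)/(2m)}·(E[|X|^{m+1}]^{1/(2m)} + E[|Y|^{m+1}]^{1/(2m)})`. -/
theorem stmt11 {Ω : Type*} [MeasurableSpace Ω] (P : Measure Ω) [IsProbabilityMeasure P]
    (m : ℕ) (hm : 1 ≤ m) (X Y : Ω → ℝ) (hX : Measurable X) (hY : Measurable Y)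
    (hXm : Integrable (fun ω => |X ω| ^ (m + 1)) P)
    (hYm : Integrable (fun ω => |Y ω| ^ (m + 1)) P) :
    rhoW 2 (P.map X) (P.map Y) ≤
      2 ^ (((m : ℝ) + 1) / (2 * m)) *
        rhoW 1 (P.map X) (P.map Y) ^ (((m : ℝ) - 1) / (2 * m)) *
        ((∫ ω, |X ω| ^ (m + 1) ∂P) ^ (1 / (2 * (m : ℝ))) +
          (∫ ω, |Y ω| ^ (m + 1) ∂P) ^ (1 / (2 * (m : ℝ)))) := by
  haveI hμP : IsProbabilityMeasure (P.map X) := Measure.isProbabilityMeasure_map hX.aemeasurable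
  haveI hνP : IsProbabilityMeasure (P.map Y) := Measure.isProbabilityMeasure_map hY.aemeasurable
  set μ := P.map X with hμ_def
  set ν := P.map Y with hν_def
  set A : ℝ := ∫ ω, |X ω| ^ (m + 1) ∂P with hA_def
  set B : ℝ := ∫ ω, |Y ω| ^ (m + 1) ∂P with hB_def
  have hA0 : 0 ≤ A := integral_nonneg fun ω => pow_nonneg (abs_nonneg _) _
  have hB0 : 0 ≤ B := integral_nonneg fun ω => pow_nonneg (abs_nonneg _) _
  set e : ℝ := ((m : ℝ) + 1) / (2 * m) with he_def
  set t : ℝ := ((m : ℝ) - 1) / (2 * m) with ht_def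
  set C : ℝ := A ^ (1 / (2 * (m : ℝ))) + B ^ (1 / (2 * (m : ℝ))) with hC_def
  have hmR : (1 : ℝ) ≤ m := by exact_mod_cast hm
  have ht0 : 0 ≤ t := div_nonneg (by linarith) (by positivity)
  have hC0 : 0 ≤ C := add_nonneg (Real.rpow_nonneg hA0 _) (Real.rpow_nonneg hB0 _)
  have h2e0 : (0 : ℝ) ≤ 2 ^ e := Real.rpow_nonneg (by norm_num) e
  set S₁ : Set ℝ := { c | ∃ π : Measure (ℝ × ℝ),
      π.map Prod.fst = μ ∧ π.map Prod.snd = ν ∧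
      c = (∫ z, |z.1 - z.2| ^ (1 : ℝ) ∂π) ^ (1 / (1 : ℝ)) } with hS1_def
  have hrho1 : rhoW 1 μ ν = sInf S₁ := rfl
  have hS1ne : S₁.Nonempty := by
    refine ⟨_, μ.prod ν, ?_, ?_, rfl⟩
    · rw [Measure.map_fst_prod]; simp
    · rw [Measure.map_snd_prod]; simp
  have h0S1 : ∀ c ∈ S₁, 0 ≤ c := by
    rintro c ⟨π, _, _, rfl⟩
    exact Real.rpow_nonneg
      (integral_nonneg fun z => Real.rpow_nonneg (abs_nonneg _) _) _
  have key2 : ∀ c ∈ S₁, rhoW 2 μ ν ≤ 2 ^ e * c ^ t * C := by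
    rintro c ⟨π, hπ1, hπ2, rfl⟩
    haveI hπP : IsProbabilityMeasure π := by
      constructor
      have h := congrArg (fun m : Measure ℝ => m Set.univ) hπ1
      simp only [Measure.map_apply measurable_fst MeasurableSet.univ,
        Set.preimage_univ] at h
      rw [h]
      exact measure_univ
    set f : ℝ × ℝ → ℝ := fun z => |z.1 - z.2| with hf_def
    have hfm : Measurable f := (measurable_fst.sub measurable_snd).abs
    have hf0 : ∀ z, 0 ≤ f z := fun z => abs_nonneg _
    have hg : Measurable fun x : ℝ => |x| ^ (m + 1) := measurable_abs.pow_const _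
    have hIX : Integrable (fun z : ℝ × ℝ => |z.1| ^ (m + 1)) π := by
      have h1 : Integrable (fun x : ℝ => |x| ^ (m + 1)) μ := by
        rw [hμ_def, integrable_map_measure hg.aestronglyMeasurable hX.aemeasurable]
        exact hXm
      rw [← hπ1, integrable_map_measure hg.aestronglyMeasurable
        measurable_fst.aemeasurable] at h1
      exact h1
    have hIY : Integrable (fun z : ℝ × ℝ => |z.2| ^ (m + 1)) π := by
      have h1 : Integrable (fun x : ℝ => |x| ^ (m + 1)) ν := by
        rw [hν_def, integrable_map_measure hg.aestronglyMeasurable hY.aemeasurable]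
        exact hYm
      rw [← hπ2, integrable_map_measure hg.aestronglyMeasurable
        measurable_snd.aemeasurable] at h1
      exact h1
    have hIXeq : ∫ z : ℝ × ℝ, |z.1| ^ (m + 1) ∂π = A := by
      rw [hA_def]
      calc ∫ z : ℝ × ℝ, |z.1| ^ (m + 1) ∂π
          = ∫ x, |x| ^ (m + 1) ∂(π.map Prod.fst) :=
            (integral_map measurable_fst.aemeasurable hg.aestronglyMeasurable).symm
        _ = ∫ x, |x| ^ (m + 1) ∂(P.map X) := by rw [hπ1]
        _ = ∫ ω, |X ω| ^ (m + 1) ∂P :=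
            integral_map hX.aemeasurable hg.aestronglyMeasurable
    have hIYeq : ∫ z : ℝ × ℝ, |z.2| ^ (m + 1) ∂π = B := by
      rw [hB_def]
      calc ∫ z : ℝ × ℝ, |z.2| ^ (m + 1) ∂π
          = ∫ x, |x| ^ (m + 1) ∂(π.map Prod.snd) :=
            (integral_map measurable_snd.aemeasurable hg.aestronglyMeasurable).symm
        _ = ∫ x, |x| ^ (m + 1) ∂(P.map Y) := by rw [hπ2]
        _ = ∫ ω, |Y ω| ^ (m + 1) ∂P :=
            integral_map hY.aemeasurable hg.aestronglyMeasurable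
    have hbnd : ∀ z : ℝ × ℝ, f z ^ (m + 1) ≤
        2 ^ (m + 1) * (|z.1| ^ (m + 1) + |z.2| ^ (m + 1)) := by
      intro z
      calc f z ^ (m + 1) ≤ (|z.1| + |z.2|) ^ (m + 1) :=
            pow_le_pow_left₀ (hf0 z) (abs_sub z.1 z.2) _
        _ ≤ 2 ^ (m + 1) * (|z.1| ^ (m + 1) + |z.2| ^ (m + 1)) :=
            myPowAdd _ _ (abs_nonneg _) (abs_nonneg _) _
    have hIm : Integrable (fun z => f z ^ (m + 1)) π := by
      apply Integrable.mono' (((hIX.add hIY).const_mul ((2 : ℝ) ^ (m + 1))))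
      · exact (hfm.pow_const _).aestronglyMeasurable
      · filter_upwards with z
        rw [Real.norm_eq_abs, abs_of_nonneg (pow_nonneg (hf0 z) _)]
        exact hbnd z
    have hImle : ∫ z, f z ^ (m + 1) ∂π ≤ 2 ^ (m + 1) * (A + B) := by
      calc ∫ z, f z ^ (m + 1) ∂π
          ≤ ∫ z : ℝ × ℝ, 2 ^ (m + 1) * (|z.1| ^ (m + 1) + |z.2| ^ (m + 1)) ∂π :=
            integral_mono hIm ((hIX.add hIY).const_mul _) hbnd
        _ = 2 ^ (m + 1) * (A + B) := by
            rw [integral_const_mul, integral_add hIX hIY, hIXeq, hIYeq]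
    have hu0 : 0 ≤ ∫ z, f z ^ (m + 1) ∂π :=
      integral_nonneg fun z => pow_nonneg (hf0 z) _
    have hv0 : 0 ≤ ∫ z, f z ∂π := integral_nonneg hf0
    have hstep := myKey m hm hfm hf0 hIm
    have h2le : rhoW 2 μ ν ≤ (∫ z, f z ^ (2 : ℝ) ∂π) ^ ((1 : ℝ) / 2) := by
      apply csInf_le
      · refine ⟨0, ?_⟩
        rintro x ⟨π', _, _, rfl⟩
        exact Real.rpow_nonneg
          (integral_nonneg fun z => Real.rpow_nonneg (abs_nonneg _) _) _
      · exact ⟨π, hπ1, hπ2, rfl⟩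
    have hD : (∫ z, f z ^ (m + 1) ∂π) ^ (1 / (2 * (m : ℝ))) ≤ 2 ^ e * C := by
      have hinv0 : (0 : ℝ) ≤ 1 / (2 * (m : ℝ)) := by positivity
      have hinv1 : 1 / (2 * (m : ℝ)) ≤ 1 := by
        rw [div_le_one (by linarith)]
        linarith
      calc (∫ z, f z ^ (m + 1) ∂π) ^ (1 / (2 * (m : ℝ)))
          ≤ (2 ^ (m + 1) * (A + B)) ^ (1 / (2 * (m : ℝ))) :=
            Real.rpow_le_rpow hu0 hImle hinv0
        _ = 2 ^ e * (A + B) ^ (1 / (2 * (m : ℝ))) := by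
            rw [Real.mul_rpow (by positivity) (add_nonneg hA0 hB0)]
            congr 1
            rw [← Real.rpow_natCast (2 : ℝ) (m + 1), ← Real.rpow_mul (by norm_num)]
            rw [he_def]
            congr 1
            push_cast
            ring
        _ ≤ 2 ^ e * C := by
            rw [hC_def]
            exact mul_le_mul_of_nonneg_left
              (myRpowAdd hA0 hB0 hinv0 hinv1) h2e0
    have hc : (∫ z, |z.1 - z.2| ^ (1 : ℝ) ∂π) ^ (1 / (1 : ℝ)) = ∫ z, f z ∂π := by
      simp [hf_def]
    rw [hc]
    calc rhoW 2 μ ν ≤ (∫ z, f z ^ (2 : ℝ) ∂π) ^ ((1 : ℝ) / 2) := h2le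
      _ ≤ (∫ z, f z ^ (m + 1) ∂π) ^ (1 / (2 * (m : ℝ))) * (∫ z, f z ∂π) ^ t := hstep
      _ ≤ (2 ^ e * C) * (∫ z, f z ∂π) ^ t :=
          mul_le_mul_of_nonneg_right hD (Real.rpow_nonneg hv0 t)
      _ = 2 ^ e * (∫ z, f z ∂π) ^ t * C := by ring
  -- limit step
  have hq0 : 0 ≤ rhoW 1 μ ν := by
    rw [hrho1]
    exact le_csInf hS1ne h0S1
  set q : ℝ := rhoW 1 μ ν with hq_def
  have key3 : ∀ ε : ℝ, 0 < ε → rhoW 2 μ ν ≤ 2 ^ e * (q + ε) ^ t * C := by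
    intro ε hε
    obtain ⟨c, hcS, hclt⟩ := exists_lt_of_csInf_lt hS1ne
      (show sInf S₁ < q + ε by rw [← hrho1]; exact lt_add_of_pos_right _ hε)
    refine (key2 c hcS).trans ?_
    have hct : c ^ t ≤ (q + ε) ^ t := Real.rpow_le_rpow (h0S1 c hcS) hclt.le ht0
    exact mul_le_mul_of_nonneg_right (mul_le_mul_of_nonneg_left hct h2e0) hC0
  have htend : Filter.Tendsto (fun ε : ℝ => 2 ^ e * (q + ε) ^ t * C)
      (nhdsWithin 0 (Set.Ioi 0)) (nhds (2 ^ e * q ^ t * C)) := by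
    have h2 : ContinuousAt (fun y : ℝ => y ^ t) (q + 0) := by
      rw [add_zero]
      exact Real.continuousAt_rpow_const q t (Or.inr ht0)
    have h1 : ContinuousAt (fun x : ℝ => q + x) 0 := by fun_prop
    have hc1 : ContinuousAt (fun x : ℝ => 2 ^ e * (q + x) ^ t * C) 0 :=
      (continuousAt_const.mul (h2.comp h1)).mul continuousAt_const
    have h3 := (hc1.continuousWithinAt (s := Set.Ioi 0)).tendsto
    simpa using h3
  exact ge_of_tendsto htend
    (eventually_nhdsWithin_of_forall fun ε hε => key3 ε hε)
end
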